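/- Let (X, Y, λ, q, α) be a Wall pairing of rank g, and let (y_1, …, y_g) be elements of Y spanning a free direct summand of rank g of Y, with α(y_i) = 0 and q(y_i, y_j) = 0 for all i, j. Then there exist a unique basis (x_1,…,x_g) of X and a unique basis (z_1,…,z_g) of Torsion(Y) such that for all i, j: λ(x_i, y_j) = δ_{ij}, λ(x_i, z_j) = 0, q(y_i, z_j) = δ_{ij}, q(z_i, z_j) = 0, and α(z_i) = 0. -/

import Mathlib

/-- A Wall pairing of rank `g`.  `X` is a free `ℤ`-module of rank `g` (with chosen
basis `bX`), `Y ≅ ℤ^g ⊕ (ℤ/2)^g` via `eY` (the images of the standard generators are the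
`y_i = eY (Pi.single i 1, 0)` and `z_i = eY (0, Pi.single i 1)`, the latter forming a basis of the
torsion subgroup), `lam` is the bilinear pairing, `qf` the symmetric bilinear form, and `alpha`
a quadratic-type refinement valued in an abelian group `A` with homomorphism `bd : ℤ/2 → A`. -/
structure WallPairing (g : ℕ) (X Y A : Type) [AddCommGroup X] [AddCommGroup Y]
    [AddCommGroup A] where
  lam : X →+ Y →+ ℤ
  qf : Y →+ Y →+ ZMod 2
  qf_symm : ∀ a b : Y, qf a b = qf b a
  bd : ZMod 2 →+ A
  alpha : Y → A
  alpha_add : ∀ a b : Y, alpha (a + b) = alpha a + alpha b + bd (qf a b)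
  bX : Module.Basis (Fin g) ℤ X
  eY : ((Fin g → ℤ) × (Fin g → ZMod 2)) ≃+ Y
  lam_xy : ∀ i j, lam (bX i) (eY (Pi.single j 1, 0)) = if i = j then 1 else 0
  lam_xz : ∀ i j, lam (bX i) (eY (0, Pi.single j 1)) = 0
  q_yz : ∀ i j, qf (eY (Pi.single i 1, 0)) (eY (0, Pi.single j 1)) = if i = j then 1 else 0
  q_yy : ∀ i j, qf (eY (Pi.single i 1, 0)) (eY (Pi.single j 1, 0)) = 0
  q_zz : ∀ i j, qf (eY (0, Pi.single i 1)) (eY (0, Pi.single j 1)) = 0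
  alpha_y : ∀ i, alpha (eY (Pi.single i 1, 0)) = 0
  alpha_z : ∀ i, alpha (eY (0, Pi.single i 1)) = 0
/-- The subgroup of `X` of elements `x` with `λ(x, w) = 0` for all `w ∈ S` (denoted `S^⊥`). -/
def lamPerpX {X Y : Type} [AddCommGroup X] [AddCommGroup Y] (lam : X →+ Y →+ ℤ)
    (S : AddSubgroup Y) : AddSubgroup X where
  carrier := {x : X | ∀ w ∈ S, lam x w = 0}
  zero_mem' := by intro w hw; simp
  add_mem' := by intro a b ha hb w hw; simp [ha w hw, hb w hw]
  neg_mem' := by intro a ha w hw; simp [ha w hw]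

/-- The subgroup of `Y` of elements `y` with `λ(v, y) = 0` for all `v ∈ S` (denoted `S^⊥`). -/
def lamPerpY {X Y : Type} [AddCommGroup X] [AddCommGroup Y] (lam : X →+ Y →+ ℤ)
    (S : AddSubgroup X) : AddSubgroup Y where
  carrier := {y : Y | ∀ v ∈ S, lam v y = 0}
  zero_mem' := by intro v hv; simp
  add_mem' := by intro a b ha hb v hv; simp [ha v hv, hb v hv]
  neg_mem' := by intro a ha v hv; simp [ha v hv]

/-- The subgroup of `Y` of elements `y` with `q(y, w) = 0` for all `w ∈ S` (denoted `Ŝ`). -/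
def qPerp {Y : Type} [AddCommGroup Y] (q : Y →+ Y →+ ZMod 2) (S : AddSubgroup Y) :
    AddSubgroup Y where
  carrier := {y : Y | ∀ w ∈ S, q y w = 0}
  zero_mem' := by intro w hw; simp
  add_mem' := by intro a b ha hb w hw; simp [ha w hw, hb w hw]
  neg_mem' := by intro a ha w hw; simp [ha w hw]

/-! Let `π : Y → ℤ^g` be the free part (first coordinate under `eY`). Its kernel is the torsion
subgroup `(ℤ/2)^g`, and `λ(x, w)`, as well as `q(w, t)` for torsion `t`, depend on `w` only through
`π w`. Since `y` spans a complemented free subgroup of rank `g`, a rank count shows that the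
`π (y i)` form a basis of `ℤ^g`: their matrix `M` is invertible over `ℤ`, hence also mod `2`.
The conditions `λ(x_i, y_j) = δ_ij` and `q(y_i, z_j) = δ_ij` with `z_j` torsion then say exactly
that the coordinates of `x_i` and of `z_j` are the columns of `M⁻¹` and of `(M mod 2)⁻¹`. The
remaining conditions hold for all torsion elements: `q` vanishes on torsion, so `α` is additive
there, and it vanishes on the standard generators. -/

open Matrix Module

theorem AddMonoidHom.sum_val_nsmul_apply_single {ι G : Type*} [Fintype ι] [DecidableEq ι]
    [AddCommMonoid G] {n : ℕ} [NeZero n] (f : (ι → ZMod n) →+ G) (c : ι → ZMod n) :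
    ∑ i, (c i).val • f (Pi.single i 1) = f c := by
  simp_rw [← map_nsmul, ← map_sum, ← Pi.single_smul, nsmul_one, ZMod.natCast_zmod_val,
    Finset.univ_sum_single]

theorem Matrix.mulVec_eq_iff_eq_nonsing_inv_mulVec {n R : Type*} [Fintype n] [DecidableEq n]
    [CommRing R] {A : Matrix n n R} (hA : IsUnit A.det) {u v : n → R} :
    A *ᵥ u = v ↔ u = A⁻¹ *ᵥ v := by
  constructor <;> rintro rfl
  · rw [mulVec_mulVec, nonsing_inv_mul _ hA, one_mulVec]
  · rw [mulVec_mulVec, mul_nonsing_inv _ hA, one_mulVec]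

section TorsionKernel

variable {ι Y M : Type*} [AddCommGroup Y] [AddCommGroup M] {π : Y →+ M} {S C : AddSubgroup Y}

theorem AddMonoidHom.linearIndependent_apply_basis_of_ker_le_torsion
    (hπ : π.ker ≤ AddCommGroup.torsion Y) (B : Basis ι ℤ S) :
    LinearIndependent ℤ fun i => π (B i) := by
  have := isTorsionFree_int_iff_isAddTorsionFree.mp B.isTorsionFree
  refine B.linearIndependent.map' (π.comp S.subtype).toIntLinearMap ?_
  refine LinearMap.ker_eq_bot'.mpr fun s hs => ?_
  exact (isOfFinAddOrder_iff_eq_zero s).mp (AddSubmonoid.isOfFinAddOrder_coe.mp (hπ hs))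

theorem AddMonoidHom.apply_eq_zero_of_mem_isCompl_of_ker_le_torsion [Fintype ι]
    [IsAddTorsionFree M] [Module.Finite ℤ M] (hπ : π.ker ≤ AddCommGroup.torsion Y)
    (hSC : IsCompl S C) (B : Basis ι ℤ S) (hrank : finrank ℤ M = Fintype.card ι) {c : Y}
    (hc : c ∈ C) :
    π c = 0 := by
  -- `π c` and the `π (B i)` are too many to be independent in `M`, so `a • c + s ∈ ker π` for
  -- some `a ≠ 0` and `s ∈ S`; a multiple `n • a • c` then lies in `S ⊓ C = ⊥`.
  have hdep : ¬ LinearIndependent ℤ fun o : Option ι => o.elim (π c) fun i => π (B i) :=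
    fun h => by simpa [hrank] using h.fintype_card_le_finrank
  obtain ⟨a, hsum, hne⟩ := Fintype.not_linearIndependent_iff.mp hdep
  rw [Fintype.sum_option] at hsum
  have ha : a none ≠ 0 := by
    intro h0
    rw [h0, zero_smul, zero_add] at hsum
    have := Fintype.linearIndependent_iff.mp
      (π.linearIndependent_apply_basis_of_ker_le_torsion hπ B) _ hsum
    obtain ⟨_ | i, hi⟩ := hne
    exacts [hi h0, hi (this i)]
  set s : S := ∑ i, a (some i) • B i
  have hker : a none • c + s ∈ π.ker := by simpa [s, map_sum, map_zsmul] using hsum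
  obtain ⟨n, hn, hns⟩ := isOfFinAddOrder_iff_nsmul_eq_zero.mp (hπ hker)
  have hnc : n • a none • c = 0 := by
    have hS : n • a none • c ∈ S := by
      have hadd : n • a none • c + n • (s : Y) = 0 := by rwa [← smul_add]
      rw [eq_neg_of_add_eq_zero_left hadd]
      exact neg_mem (nsmul_mem s.2 n)
    have hmem : n • a none • c ∈ S ⊓ C := ⟨hS, nsmul_mem (zsmul_mem hc _) n⟩
    rwa [hSC.inf_eq_bot, AddSubgroup.mem_bot] at hmem
  have hc_fin : IsOfFinAddOrder c := isOfFinAddOrder_iff_zsmul_eq_zero.mpr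
    ⟨n * a none, mul_ne_zero (by exact_mod_cast hn.ne') ha, by rw [mul_smul, natCast_zsmul, hnc]⟩
  exact (isOfFinAddOrder_iff_eq_zero _).mp (π.isOfFinAddOrder hc_fin)

theorem AddMonoidHom.span_apply_basis_eq_top_of_isCompl (hπ : Function.Surjective π)
    (hSC : IsCompl S C) (B : Basis ι ℤ S) (hC : ∀ c ∈ C, π c = 0) :
    Submodule.span ℤ (Set.range fun i => π (B i)) = ⊤ := by
  refine Submodule.eq_top_iff'.mpr fun m => ?_
  obtain ⟨w, rfl⟩ := hπ m
  obtain ⟨s, hs, c, hc, rfl⟩ := AddSubgroup.mem_sup.mp (hSC.sup_eq_top ▸ AddSubgroup.mem_top w)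
  rw [map_add, hC c hc, add_zero]
  have := Submodule.apply_mem_span_image_of_mem_span (π.comp S.subtype).toIntLinearMap
    (B.mem_span ⟨s, hs⟩)
  rwa [← Set.range_comp] at this

end TorsionKernel

namespace WallPairing

variable {g : ℕ} {X Y A : Type} [AddCommGroup X] [AddCommGroup Y] [AddCommGroup A]
  (W : WallPairing g X Y A)

def freePart : Y →+ (Fin g → ℤ) := (AddMonoidHom.fst _ _).comp W.eY.symm.toAddMonoidHom

def torsionEmb : (Fin g → ZMod 2) →+ Y := W.eY.toAddMonoidHom.comp (AddMonoidHom.inr _ _)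

@[simp] lemma freePart_eY (a : Fin g → ℤ) (b : Fin g → ZMod 2) : W.freePart (W.eY (a, b)) = a := by
  simp [freePart]

lemma torsionEmb_apply (b : Fin g → ZMod 2) : W.torsionEmb b = W.eY (0, b) := rfl

lemma eY_eq_sum (a : Fin g → ℤ) (b : Fin g → ZMod 2) :
    W.eY (a, b) =
      ∑ i, a i • W.eY (Pi.single i 1, 0) + ∑ i, (b i).val • W.eY (0, Pi.single i 1) := by
  have hfree : ∑ i, a i • W.eY (Pi.single i 1, 0) = W.eY (a, 0) := by
    simp_rw [← map_zsmul, ← map_sum]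
    congr 1
    ext j <;> simp [Prod.fst_sum, Prod.snd_sum, Finset.sum_apply, Pi.single_apply]
  have htors := W.torsionEmb.sum_val_nsmul_apply_single b
  simp only [torsionEmb_apply] at htors
  rw [hfree, htors, ← map_add, Prod.mk_add_mk, add_zero, zero_add]

lemma addMonoidHom_ext {G : Type*} [AddCommGroup G] {f f' : Y →+ G}
    (hy : ∀ i, f (W.eY (Pi.single i 1, 0)) = f' (W.eY (Pi.single i 1, 0)))
    (hz : ∀ i, f (W.eY (0, Pi.single i 1)) = f' (W.eY (0, Pi.single i 1))) : f = f' := by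
  ext w
  obtain ⟨⟨a, b⟩, rfl⟩ := W.eY.surjective w
  rw [eY_eq_sum]
  simp only [map_add, map_sum, map_zsmul, map_nsmul, hy, hz]

lemma lam_bX_apply (k : Fin g) (w : Y) : W.lam (W.bX k) w = W.freePart w k := by
  refine DFunLike.congr_fun (W.addMonoidHom_ext (f' := (Pi.evalAddMonoidHom _ k).comp W.freePart)
    (fun i => ?_) (fun i => ?_)) w
  · simp [W.lam_xy, Pi.single_apply]
  · simp [W.lam_xz]

lemma lam_apply (x : X) (w : Y) : W.lam x w = W.bX.repr x ⬝ᵥ W.freePart w := by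
  conv_lhs => rw [← W.bX.sum_repr x]
  simp only [map_sum, map_zsmul, AddMonoidHom.finsetSum_apply, AddMonoidHom.smul_apply,
    lam_bX_apply, smul_eq_mul, dotProduct]

lemma qf_torsionEmb_single (w : Y) (l : Fin g) :
    W.qf w (W.torsionEmb (Pi.single l 1)) = W.freePart w l := by
  refine DFunLike.congr_fun (W.addMonoidHom_ext (f := W.qf.flip _)
    (f' := (Int.castAddHom (ZMod 2)).comp ((Pi.evalAddMonoidHom _ l).comp W.freePart))
    (fun i => ?_) (fun i => ?_)) w
  · simp [torsionEmb_apply, W.q_yz, Pi.single_apply, eq_comm]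
  · simp [torsionEmb_apply, W.q_zz]

lemma qf_torsionEmb (w : Y) (b : Fin g → ZMod 2) :
    W.qf w (W.torsionEmb b) = (fun l => (W.freePart w l : ZMod 2)) ⬝ᵥ b := by
  rw [← (W.torsionEmb).sum_val_nsmul_apply_single b]
  simp only [map_sum, map_nsmul, qf_torsionEmb_single, dotProduct, nsmul_eq_mul,
    ZMod.natCast_zmod_val, mul_comm]

@[simp] lemma freePart_torsionEmb (b : Fin g → ZMod 2) : W.freePart (W.torsionEmb b) = 0 :=
  W.freePart_eY 0 b

lemma torsionEmb_injective : Function.Injective W.torsionEmb :=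
  fun _ _ h => congrArg Prod.snd (W.eY.injective h)

lemma freePart_surjective : Function.Surjective W.freePart :=
  fun a => ⟨W.eY (a, 0), W.freePart_eY a 0⟩

lemma lam_torsionEmb (x : X) (b : Fin g → ZMod 2) : W.lam x (W.torsionEmb b) = 0 := by
  simp [lam_apply]

lemma qf_torsionEmb_torsionEmb (b c : Fin g → ZMod 2) :
    W.qf (W.torsionEmb b) (W.torsionEmb c) = 0 := by
  simp [qf_torsionEmb]

lemma alpha_torsionEmb (b : Fin g → ZMod 2) : W.alpha (W.torsionEmb b) = 0 := by
  let f : (Fin g → ZMod 2) →+ A := AddMonoidHom.mk' (fun b => W.alpha (W.torsionEmb b))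
    fun b c => by rw [map_add, W.alpha_add, W.qf_torsionEmb_torsionEmb, map_zero, add_zero]
  change f b = 0
  rw [← f.sum_val_nsmul_apply_single b]
  simp [f, torsionEmb_apply, W.alpha_z]

lemma two_nsmul_torsionEmb (b : Fin g → ZMod 2) : 2 • W.torsionEmb b = 0 := by
  rw [← map_nsmul, two_nsmul, ZModModule.add_self, map_zero]

lemma ker_freePart_eq_range_torsionEmb : W.freePart.ker = W.torsionEmb.range := by
  ext w
  refine ⟨fun h => ⟨(W.eY.symm w).2, W.eY.symm.injective ?_⟩, ?_⟩
  · rw [torsionEmb_apply, AddEquiv.symm_apply_apply]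
    exact Prod.ext h.symm rfl
  · rintro ⟨b, rfl⟩
    exact W.freePart_torsionEmb b

lemma range_torsionEmb : W.torsionEmb.range = AddCommGroup.torsion Y := by
  refine le_antisymm ?_ fun t ht => ?_
  · rintro _ ⟨b, rfl⟩
    exact isOfFinAddOrder_iff_nsmul_eq_zero.mpr ⟨2, two_pos, W.two_nsmul_torsionEmb b⟩
  · rw [← ker_freePart_eq_range_torsionEmb]
    exact (isOfFinAddOrder_iff_eq_zero _).mp (W.freePart.isOfFinAddOrder ht)

lemma ker_freePart_eq_torsion : W.freePart.ker = AddCommGroup.torsion Y := by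
  rw [ker_freePart_eq_range_torsionEmb, range_torsionEmb]

variable (y : Fin g → Y)

def freeMatrix : Matrix (Fin g) (Fin g) ℤ := Matrix.of fun i => W.freePart (y i)

lemma lam_apply_eq_freeMatrix_mulVec (x : X) (j : Fin g) :
    W.lam x (y j) = (W.freeMatrix y *ᵥ W.bX.repr x) j := by
  rw [lam_apply, mulVec, dotProduct_comm]
  rfl

lemma qf_torsionEmb_eq_freeMatrix_mulVec (b : Fin g → ZMod 2) (i : Fin g) :
    W.qf (y i) (W.torsionEmb b) = ((W.freeMatrix y).map (Int.cast) *ᵥ b) i :=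
  W.qf_torsionEmb (y i) b

theorem isUnit_det_freeMatrix {S C : AddSubgroup Y} (hSC : IsCompl S C)
    (B : Basis (Fin g) ℤ S) (hB : ∀ i, (B i : Y) = y i) :
    IsUnit (W.freeMatrix y).det := by
  have hπ := W.ker_freePart_eq_torsion.le
  have hC (c : Y) (hc : c ∈ C) : W.freePart c = 0 :=
    W.freePart.apply_eq_zero_of_mem_isCompl_of_ker_le_torsion hπ hSC B (by simp) hc
  have h := (Pi.basisFun ℤ (Fin g)).is_basis_iff_det.mp
    ⟨W.freePart.linearIndependent_apply_basis_of_ker_le_torsion hπ B,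
      W.freePart.span_apply_basis_eq_top_of_isCompl W.freePart_surjective hSC B hC⟩
  simp only [Pi.basisFun_det_apply, hB] at h
  exact h

noncomputable def lamDual (i : Fin g) : X :=
  W.bX.equivFun.symm ((W.freeMatrix y)⁻¹ *ᵥ Pi.single i 1)

noncomputable def qfDual (j : Fin g) : Y :=
  W.torsionEmb (((W.freeMatrix y).map (Int.cast : ℤ → ZMod 2))⁻¹ *ᵥ Pi.single j 1)

variable {y}

lemma lam_eq_ite_iff_eq_lamDual (hM : IsUnit (W.freeMatrix y).det) {x : X} {i : Fin g} :
    (∀ j, W.lam x (y j) = if i = j then 1 else 0) ↔ x = W.lamDual y i := by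
  simp_rw [lam_apply_eq_freeMatrix_mulVec, lamDual, LinearEquiv.eq_symm_apply, eq_comm (a := i),
    ← Pi.single_apply, ← funext_iff]
  exact mulVec_eq_iff_eq_nonsing_inv_mulVec hM

lemma exists_basis_lamDual (hM : IsUnit (W.freeMatrix y).det) :
    ∃ B : Basis (Fin g) ℤ X, ∀ i, B i = W.lamDual y i := by
  let e := (W.freeMatrix y)⁻¹.toLinearEquiv' (invertibleOfIsUnitDet _ (isUnit_nonsing_inv_det _ hM))
  exact ⟨(Pi.basisFun ℤ (Fin g)).map (e.trans W.bX.equivFun.symm), fun i => by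
    rw [Basis.map_apply, Pi.basisFun_apply]
    rfl⟩

lemma isUnit_det_map_freeMatrix (hM : IsUnit (W.freeMatrix y).det) :
    IsUnit ((W.freeMatrix y).map (Int.cast : ℤ → ZMod 2)).det := by
  have h := hM.map (Int.castRingHom (ZMod 2))
  rw [RingHom.map_det] at h
  exact h

lemma qf_eq_ite_iff_eq_qfDual (hM : IsUnit (W.freeMatrix y).det) {z : Y} (hz : 2 • z = 0)
    {j : Fin g} :
    (∀ i, W.qf (y i) z = if i = j then 1 else 0) ↔ z = W.qfDual y j := by
  obtain ⟨b, rfl⟩ : z ∈ W.torsionEmb.range := W.range_torsionEmb ▸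
    isOfFinAddOrder_iff_nsmul_eq_zero.mpr ⟨2, two_pos, hz⟩
  simp_rw [qf_torsionEmb_eq_freeMatrix_mulVec, qfDual, W.torsionEmb_injective.eq_iff,
    ← Pi.single_apply, ← funext_iff]
  exact mulVec_eq_iff_eq_nonsing_inv_mulVec (W.isUnit_det_map_freeMatrix hM)

lemma sum_val_nsmul_qfDual (c : Fin g → ZMod 2) :
    ∑ i, (c i).val • W.qfDual y i =
      W.torsionEmb (((W.freeMatrix y).map (Int.cast : ℤ → ZMod 2))⁻¹ *ᵥ c) :=
  (W.torsionEmb.comp (mulVecLin _).toAddMonoidHom).sum_val_nsmul_apply_single c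

lemma exists_eq_sum_qfDual (hM : IsUnit (W.freeMatrix y).det) {t : Y}
    (ht : t ∈ AddCommGroup.torsion Y) :
    ∃ c : Fin g → ZMod 2, t = ∑ i, (c i).val • W.qfDual y i := by
  obtain ⟨b, rfl⟩ := W.range_torsionEmb.ge ht
  refine ⟨(W.freeMatrix y).map Int.cast *ᵥ b, ?_⟩
  rw [sum_val_nsmul_qfDual, mulVec_mulVec, nonsing_inv_mul _ (W.isUnit_det_map_freeMatrix hM),
    one_mulVec]

lemma eq_zero_of_sum_val_nsmul_qfDual_eq_zero (hM : IsUnit (W.freeMatrix y).det)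
    {c : Fin g → ZMod 2} (hc : ∑ i, (c i).val • W.qfDual y i = 0) : c = 0 := by
  rw [sum_val_nsmul_qfDual, ← map_zero W.torsionEmb, W.torsionEmb_injective.eq_iff, eq_comm,
    ← mulVec_eq_iff_eq_nonsing_inv_mulVec (W.isUnit_det_map_freeMatrix hM),
    mulVec_zero] at hc
  exact hc.symm

end WallPairing

theorem wallPairing_unique_complementary_bases_general {g : ℕ} {X Y A : Type} [AddCommGroup X]
    [AddCommGroup Y] [AddCommGroup A] (W : WallPairing g X Y A) (y : Fin g → Y)
    (hy_summand : ∃ S C : AddSubgroup Y, IsCompl S C ∧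
      ∃ B : Module.Basis (Fin g) ℤ S, ∀ i, (B i : Y) = y i) :
    ∃! p : (Fin g → X) × (Fin g → Y),
      (∃ B : Module.Basis (Fin g) ℤ X, ∀ i, B i = p.1 i) ∧
      (∀ i, p.2 i ∈ AddCommGroup.torsion Y) ∧
      (∀ i, 2 • p.2 i = 0) ∧
      (∀ t ∈ AddCommGroup.torsion Y, ∃ c : Fin g → ZMod 2,
        t = ∑ i : Fin g, (c i).val • p.2 i) ∧
      (∀ c : Fin g → ZMod 2, ∑ i : Fin g, (c i).val • p.2 i = 0 → c = 0) ∧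
      (∀ i j, W.lam (p.1 i) (y j) = if i = j then 1 else 0) ∧
      (∀ i j, W.lam (p.1 i) (p.2 j) = 0) ∧
      (∀ i j, W.qf (y i) (p.2 j) = if i = j then 1 else 0) ∧
      (∀ i j, W.qf (p.2 i) (p.2 j) = 0) ∧
      (∀ i, W.alpha (p.2 i) = 0) := by
  obtain ⟨S, C, hSC, B, hB⟩ := hy_summand
  have hM := W.isUnit_det_freeMatrix y hSC B hB
  have h2 (j : Fin g) : 2 • W.qfDual y j = 0 := W.two_nsmul_torsionEmb _
  refine ⟨(W.lamDual y, W.qfDual y), ⟨W.exists_basis_lamDual hM,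
    fun j => W.range_torsionEmb ▸ ⟨_, rfl⟩, h2,
    fun t => W.exists_eq_sum_qfDual hM, fun c => W.eq_zero_of_sum_val_nsmul_qfDual_eq_zero hM,
    fun i => (W.lam_eq_ite_iff_eq_lamDual hM).mpr rfl, fun i j => W.lam_torsionEmb _ _,
    fun i j => (W.qf_eq_ite_iff_eq_qfDual hM (h2 j)).mpr rfl i,
    fun i j => W.qf_torsionEmb_torsionEmb _ _, fun i => W.alpha_torsionEmb _⟩, ?_⟩
  rintro ⟨x, z⟩ ⟨-, -, hz2, -, -, hx, -, hz, -, -⟩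
  exact Prod.ext (funext fun i => (W.lam_eq_ite_iff_eq_lamDual hM).mp (hx i))
    (funext fun j => (W.qf_eq_ite_iff_eq_qfDual hM (hz2 j)).mp fun i => hz i j)

/-- Given elements `(y_1,…,y_g)` of `Y` spanning a free rank-`g` direct summand
with `α(y_i) = 0` and `q(y_i,y_j) = 0`, there are a unique basis `(x_1,…,x_g)` of `X` and a
unique basis `(z_1,…,z_g)` of `Torsion(Y)` (an elementary abelian 2-group) with
`λ(x_i,y_j) = δ_{ij}`, `λ(x_i,z_j) = 0`, `q(y_i,z_j) = δ_{ij}`, `q(z_i,z_j) = 0`, `α(z_i) = 0`. -/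
theorem wallPairing_unique_complementary_bases {g : ℕ} {X Y A : Type} [AddCommGroup X]
    [AddCommGroup Y] [AddCommGroup A] (W : WallPairing g X Y A) (y : Fin g → Y)
    (hy_summand : ∃ S C : AddSubgroup Y, IsCompl S C ∧
      ∃ B : Module.Basis (Fin g) ℤ S, ∀ i, (B i : Y) = y i)
    (hy_alpha : ∀ i, W.alpha (y i) = 0) (hy_q : ∀ i j, W.qf (y i) (y j) = 0) :
    ∃! p : (Fin g → X) × (Fin g → Y),
      (∃ B : Module.Basis (Fin g) ℤ X, ∀ i, B i = p.1 i) ∧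
      (∀ i, p.2 i ∈ AddCommGroup.torsion Y) ∧
      (∀ i, 2 • p.2 i = 0) ∧
      (∀ t ∈ AddCommGroup.torsion Y, ∃ c : Fin g → ZMod 2,
        t = ∑ i : Fin g, (c i).val • p.2 i) ∧
      (∀ c : Fin g → ZMod 2, ∑ i : Fin g, (c i).val • p.2 i = 0 → c = 0) ∧
      (∀ i j, W.lam (p.1 i) (y j) = if i = j then 1 else 0) ∧
      (∀ i j, W.lam (p.1 i) (p.2 j) = 0) ∧
      (∀ i j, W.qf (y i) (p.2 j) = if i = j then 1 else 0) ∧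
      (∀ i j, W.qf (p.2 i) (p.2 j) = 0) ∧
      (∀ i, W.alpha (p.2 i) = 0) :=
  wallPairing_unique_complementary_bases_general W y hy_summand
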